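/- arXiv:1112.6132 — 3 statements merged into one kernel-verified Lean document; each statement's English description precedes it below -/
import Mathlib

section
/- Let A be a serial finite length abelian category, let X be an indecomposable object of A, let Y₁, …, Y_m be indecomposable objects of A, and let f : X → Y₁ ⊞ ⋯ ⊞ Y_m be a morphism with components f_i : X → Y_i. Then f is a monomorphism if and only if at least one of the components f_i is a monomorphism. -/
/-!
An indecomposable object of a serial category is isomorphic to one of the uniserial summands of
its decomposition, hence is uniserial. The kernels of the components `f ≫ π i` then form a finite
chain of subobjects of `X`; a component whose kernel is least in this chain has kernel contained in
`ker f`, so it is a monomorphism as soon as `f` is.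
-/

open CategoryTheory CategoryTheory.Limits

universe v u

attribute [local instance] CategoryTheory.Abelian.hasFiniteBiproducts

variable {A : Type u} [Category.{v} A] [Abelian A]

/-- An object is uniserial if its subobjects are totally ordered by inclusion. -/
def Uniserial (U : A) : Prop :=
  ∀ P Q : Subobject U, P ≤ Q ∨ Q ≤ P

/-- A category is serial if every object is isomorphic to a finite biproduct of
uniserial objects. -/
def IsSerial (A : Type u) [Category.{v} A] [Abelian A] : Prop :=
  ∀ X : A, ∃ (m : ℕ) (Y : Fin m → A),
    (∀ i, Uniserial (Y i)) ∧ Nonempty (X ≅ ⨁ Y)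

/-- An object is indecomposable if it is nonzero and in any decomposition as a
biproduct one of the summands is zero. -/
def Indec (X : A) : Prop :=
  ¬ IsZero X ∧ ∀ B C : A, Nonempty (X ≅ B ⊞ C) → IsZero B ∨ IsZero C

section Uniserial

variable {C : Type*} [Category C]

lemma Uniserial.of_iso {X U : C} (e : X ≅ U) (hU : Uniserial U) : Uniserial X := fun P Q =>
  let φ := Subobject.mapIsoToOrderIso e
  (hU (φ P) (φ Q)).imp φ.le_iff_le.1 φ.le_iff_le.1

lemma Uniserial.exists_le {X : C} (hX : Uniserial X) {J : Type*} [Finite J] [Nonempty J]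
    (P : J → Subobject X) : ∃ i, ∀ j, P i ≤ P j :=
  Directed.finite_le (r := (· ≥ ·)) (fun i j => (hX (P i) (P j)).elim
    (fun h => ⟨i, le_rfl, h⟩) (fun h => ⟨j, h, le_rfl⟩)) id

end Uniserial

section Biproducts

variable {C : Type*} [Category C] [Preadditive C]

lemma isZero_biproduct_of_isEmpty {J : Type*} [IsEmpty J] (Z : J → C) [HasBiproduct Z] :
    IsZero (⨁ Z) :=
  (IsZero.iff_id_eq_zero _).2 (biproduct.hom_ext _ _ isEmptyElim)

lemma mono_comp_π_of_kernelSubobject_le [HasKernels C] {X : C} {J : Type*} {Y : J → C}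
    [HasBiproduct Y] (f : X ⟶ ⨁ Y) [Mono f] (i : J)
    (h : ∀ j, kernelSubobject (f ≫ biproduct.π Y i) ≤ kernelSubobject (f ≫ biproduct.π Y j)) :
    Mono (f ≫ biproduct.π Y i) := by
  refine Preadditive.mono_of_cancel_zero _ fun g hg => zero_of_comp_mono f ?_
  refine biproduct.hom_ext _ _ fun j => ?_
  have hgi := (kernelSubobject_factors_iff _ g).2 hg
  simpa using (kernelSubobject_factors_iff _ g).1 (Subobject.factors_of_le g (h j) hgi)

noncomputable def biproductFinSuccIso [HasFiniteBiproducts C] [HasBinaryBiproducts C] {n : ℕ}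
    (Z : Fin (n + 1) → C) : ⨁ Z ≅ Z 0 ⊞ ⨁ fun j : Fin n => Z j.succ :=
  biprod.uniqueUpToIso _ _ <| isBinaryBilimitOfTotal
    { pt := ⨁ Z
      fst := biproduct.π Z 0
      snd := biproduct.lift fun j : Fin n => biproduct.π Z j.succ
      inl := biproduct.ι Z 0
      inr := biproduct.desc fun j : Fin n => biproduct.ι Z j.succ
      inl_fst := by simp
      inl_snd := by ext; simp [(Fin.succ_ne_zero _).symm]
      inr_fst := by ext; simp [Fin.succ_ne_zero]
      inr_snd := by ext; simp [biproduct.ι_π] }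
    (by simp [biproduct.lift_desc, ← Fin.sum_univ_succ (fun j => biproduct.π Z j ≫ biproduct.ι Z j)])

end Biproducts

lemma Indec.exists_iso_of_iso_biproduct {X : A} (hX : Indec X) :
    ∀ {n : ℕ} (Z : Fin n → A), (X ≅ ⨁ Z) → ∃ i, Nonempty (X ≅ Z i)
  | 0, Z, e => (hX.1 ((isZero_biproduct_of_isEmpty Z).of_iso e)).elim
  | n + 1, Z, e => by
    have e' := e ≪≫ biproductFinSuccIso Z
    rcases hX.2 _ _ ⟨e'⟩ with h | h
    · obtain ⟨i, hi⟩ := hX.exists_iso_of_iso_biproduct _ (e' ≪≫ (isoZeroBiprod h).symm)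
      exact ⟨i.succ, hi⟩
    · exact ⟨0, ⟨e' ≪≫ (isoBiprodZero h).symm⟩⟩

lemma IsSerial.uniserial_of_indec (hser : IsSerial A) {X : A} (hX : Indec X) : Uniserial X := by
  obtain ⟨n, Z, hZ, ⟨e⟩⟩ := hser X
  obtain ⟨i, ⟨e'⟩⟩ := hX.exists_iso_of_iso_biproduct Z e
  exact (hZ i).of_iso e'

theorem mono_iff_exists_component_mono
    -- `A` is a serial finite length abelian category
    [∀ X : A, IsArtinianObject X] [∀ X : A, IsNoetherianObject X]
    (hser : IsSerial A)
    (X : A) (hX : Indec X) (m : ℕ) (Y : Fin m → A) (hY : ∀ i, Indec (Y i))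
    (f : X ⟶ ⨁ Y) :
    Mono f ↔ ∃ i, Mono (f ≫ biproduct.π Y i) := by
  refine ⟨fun hf => ?_, fun ⟨i, _⟩ => mono_of_mono f (biproduct.π Y i)⟩
  have : Nonempty (Fin m) := by
    by_contra! h
    exact hX.1 (IsZero.of_mono f (isZero_biproduct_of_isEmpty Y))
  obtain ⟨i, hi⟩ := (hser.uniserial_of_indec hX).exists_le fun j =>
    kernelSubobject (f ≫ biproduct.π Y j)
  exact ⟨i, mono_comp_π_of_kernelSubobject_le f i hi⟩
end

section
/- Let K be a field and let (V_m)_{m ∈ ℕ} be an inverse system of finite-dimensional K-vector spaces with transition maps π_m : V_{m+1} → V_m, such that every π_m is surjective and the dimensions dim_K V_m are unbounded. Then the inverse limit lim_m V_m is isomorphic as a K-vector space to the product ∏_{m ∈ ℕ} K (i.e., to the space of all functions ℕ → K). -/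
/-!
A compatible sequence `(v m)` is determined by `v 0` together with the successive corrections
`v (m + 1) - s m (v m) ∈ ker π m`, where `s m` is a linear section of `π m`; hence the inverse limit
is isomorphic to `V 0 × ∏ m, ker π m`. Choosing bases, this is `K^ι` for the countable index set
`ι = Fin (dim V 0) ⊕ Σ m, Fin (dim ker π m)`. Since `dim V m = dim V 0 + ∑_{k < m} dim ker π k`,
unbounded dimensions force `ι` to be infinite, so `ι ≃ ℕ`.
-/

/-- The inverse limit of an inverse system of `K`-vector spaces indexed by `ℕ`,
realized as the subspace of the product consisting of compatible sequences. -/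
def natInverseLimit (K : Type*) [Field K] (V : ℕ → Type*)
    [∀ m, AddCommGroup (V m)] [∀ m, Module K (V m)]
    (π : ∀ m, V (m + 1) →ₗ[K] V m) : Submodule K (∀ m, V m) where
  carrier := {v | ∀ m, π m (v (m + 1)) = v m}
  add_mem' {v w} hv hw := fun m => by simp [hv m, hw m]
  zero_mem' := fun m => by simp
  smul_mem' c {v} hv := fun m => by simp [hv m]

open Module LinearMap Function

noncomputable def Module.piEquivSigmaFinrankFun (K : Type*) [Field K] {ι : Type*} (W : ι → Type*)
    [∀ i, AddCommGroup (W i)] [∀ i, Module K (W i)] [∀ i, FiniteDimensional K (W i)] :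
    (∀ i, W i) ≃ₗ[K] ((Σ i, Fin (finrank K (W i))) → K) :=
  (LinearEquiv.piCongrRight fun i => (finBasis K (W i)).equivFun).trans
    (LinearEquiv.piCurry K fun _ _ => K).symm

theorem LinearMap.finrank_eq_finrank_add_finrank_ker_of_surjective {K V W : Type*} [Field K]
    [AddCommGroup V] [Module K V] [AddCommGroup W] [Module K W] [FiniteDimensional K V]
    {f : V →ₗ[K] W} (hf : Surjective f) : finrank K V = finrank K W + finrank K (ker f) := by
  rw [← f.finrank_range_add_finrank_ker, range_eq_top.2 hf, finrank_top]

namespace natInverseLimit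

variable {K : Type*} [Field K] {V : ℕ → Type*} [∀ m, AddCommGroup (V m)] [∀ m, Module K (V m)]
  {π : ∀ m, V (m + 1) →ₗ[K] V m}

section OfSection

variable (s : ∀ m, V m →ₗ[K] V (m + 1))

def seqOfSection (a : V 0) (w : ∀ m, ker (π m)) : ∀ m, V m
  | 0 => a
  | m + 1 => s m (seqOfSection a w m) + w m

variable (hs : ∀ m, LeftInverse (π m) (s m))
include hs

theorem seqOfSection_mem (a : V 0) (w : ∀ m, ker (π m)) :
    seqOfSection s a w ∈ natInverseLimit K V π := fun m => by
  simp [seqOfSection, hs m _]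

def equivProdKerOfSection : natInverseLimit K V π ≃ₗ[K] V 0 × ∀ m, ker (π m) where
  toFun v := (v.1 0, fun m => ⟨v.1 (m + 1) - s m (v.1 m), by simp [hs m _, v.2 m]⟩)
  map_add' v w := by
    ext m
    · rfl
    · simp only [Submodule.coe_add, Pi.add_apply, map_add, Prod.snd_add]
      abel
  map_smul' c v := by
    ext m
    · rfl
    · simp [smul_sub]
  invFun p := ⟨seqOfSection s p.1 p.2, seqOfSection_mem s hs p.1 p.2⟩
  left_inv v := by
    ext m
    induction m with
    | zero => rfl
    | succ m ih =>
      change s m (seqOfSection s _ _ m) + (v.1 (m + 1) - s m (v.1 m)) = v.1 (m + 1)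
      rw [show seqOfSection s _ _ m = v.1 m from ih]
      abel
  right_inv p := by
    ext m
    · rfl
    · simp [seqOfSection]

end OfSection

noncomputable def equivProdKer (hsurj : ∀ m, Surjective (π m)) :
    natInverseLimit K V π ≃ₗ[K] V 0 × ∀ m, ker (π m) :=
  have hs m := (π m).exists_rightInverse_of_surjective (range_eq_top.2 (hsurj m))
  equivProdKerOfSection (fun m => (hs m).choose) fun m x => congr($((hs m).choose_spec) x)

end natInverseLimit

section Dimension

variable {K : Type*} [Field K] {V : ℕ → Type*} [∀ m, AddCommGroup (V m)] [∀ m, Module K (V m)]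
  [∀ m, FiniteDimensional K (V m)] {π : ∀ m, V (m + 1) →ₗ[K] V m}

theorem finrank_eq_finrank_zero_add_sum_finrank_ker (hsurj : ∀ m, Surjective (π m)) (m : ℕ) :
    finrank K (V m) = finrank K (V 0) + ∑ k ∈ Finset.range m, finrank K (ker (π k)) := by
  induction m with
  | zero => simp
  | succ m ih =>
    rw [finrank_eq_finrank_add_finrank_ker_of_surjective (hsurj m), ih, Finset.sum_range_succ,
      add_assoc]

theorem infinite_sigma_fin_finrank_ker (hsurj : ∀ m, Surjective (π m))
    (hunbdd : ∀ N : ℕ, ∃ m, N < finrank K (V m)) :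
    Infinite (Σ m, Fin (finrank K (ker (π m)))) := by
  refine not_finite_iff_infinite.1 fun _ => ?_
  obtain ⟨m, hm⟩ := hunbdd (finrank K (V 0) + Nat.card (Σ m, Fin (finrank K (ker (π m)))))
  have hsum : ∑ k ∈ Finset.range m, finrank K (ker (π k)) ≤
      Nat.card (Σ m, Fin (finrank K (ker (π m)))) := by
    have hinj : Injective (Sigma.map Fin.val fun _ => _root_.id :
        (Σ k : Fin m, Fin (finrank K (ker (π k)))) → Σ m, Fin (finrank K (ker (π m)))) :=
      Fin.val_injective.sigma_map fun _ => injective_id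
    simpa [Nat.card_sigma, Fin.sum_univ_eq_sum_range (fun k => finrank K (ker (π k)))] using
      Nat.card_le_card_of_injective _ hinj
  rw [finrank_eq_finrank_zero_add_sum_finrank_ker hsurj m] at hm
  omega

end Dimension

theorem inverseLimit_iso_pi_of_surjective_of_unbounded
    (K : Type*) [Field K] (V : ℕ → Type*)
    [∀ m, AddCommGroup (V m)] [∀ m, Module K (V m)]
    [∀ m, FiniteDimensional K (V m)]
    (π : ∀ m, V (m + 1) →ₗ[K] V m)
    (hsurj : ∀ m, Function.Surjective (π m))
    (hunbdd : ∀ N : ℕ, ∃ m, N < Module.finrank K (V m)) :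
    Nonempty (natInverseLimit K V π ≃ₗ[K] (ℕ → K)) := by
  have := infinite_sigma_fin_finrank_ker hsurj hunbdd
  obtain ⟨e⟩ : Nonempty (ℕ ≃ (Fin (finrank K (V 0)) ⊕ Σ m, Fin (finrank K (ker (π m))))) :=
    nonempty_equiv_of_countable
  exact ⟨(natInverseLimit.equivProdKer hsurj).trans <|
    ((finBasis K (V 0)).equivFun.prodCongr (piEquivSigmaFinrankFun K _)).trans <|
    (LinearEquiv.sumArrowLequivProdArrow _ _ K K).symm.trans (LinearEquiv.funCongrLeft K K e)⟩
end

section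
/- Fix an integer n ≥ 1 and let P = {(a, b) ∈ ℤ × ℤ : b ≥ a + 2}. Let k ≥ 1 and let 0 ≤ i_0 < i_1 < ⋯ < i_{k-1} ≤ n − 1 be integers, and set i_k = i_0 + n. Then for every (a, b) ∈ P the following are equivalent: (1) for every r ∈ {0, …, k−1} there exists m ∈ ℤ with (a + mn, b + mn) ∈ W(i_r, i_r + n); (2) there exist r ∈ {0, …, k−1} and m ∈ ℤ with (a + mn, b + mn) ∈ W(i_r, i_{r+1}). Moreover, the index r in (2) is unique: if (a + mn, b + mn) ∈ W(i_r, i_{r+1}) and (a + m'n, b + m'n) ∈ W(i_s, i_{s+1}) for r, s ∈ {0, …, k−1} and m, m' ∈ ℤ, then r = s. -/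
/-- The wing `W(i, i')`: pairs `(a, b)` with `b ≥ a + 2`, `i ≤ a` and `b ≤ i'`. -/
def InWing (i i' a b : ℤ) : Prop :=
  a + 2 ≤ b ∧ i ≤ a ∧ b ≤ i'

/-!
The arcs `[i r, i (r + 1)]`, `r < k`, tile the period `[i 0, i 0 + n]`, and two translates of
`[a, b]` by distinct multiples of `n` lie at least `n` apart. Hence a translate inside one arc
lies, after at most one further shift, in every window `[i s, i s + n]`, and it cannot lie in two
different arcs. Conversely, if `[a, b] + m n` lies in `[i 0, i 0 + n]`, it lies in the arc starting
at the last `i q ≤ a + m n`: a cut point `i (q + 1)` inside it would leave no room for any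
translate in `[i (q + 1), i (q + 1) + n]`.
-/

lemma mul_add_le_of_mul_lt {n m m' : ℤ} (hn : 0 ≤ n) (h : m * n < m' * n) :
    m * n + n ≤ m' * n := by
  have hm : m + 1 ≤ m' := lt_of_mul_lt_mul_right h hn
  nlinarith

lemma le_of_inWing_of_lt {n c a b m m' : ℤ} (hn : 0 ≤ n) (hc : a + m * n < c)
    (h : InWing c (c + n) (a + m' * n) (b + m' * n)) : b + m * n ≤ c := by
  obtain ⟨-, hca, hbc⟩ := h
  linarith [mul_add_le_of_mul_lt hn (show m * n < m' * n by linarith)]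

lemma exists_lt_and_le_and_lt_succ {k : ℕ} {i : ℕ → ℤ} {x : ℤ} (hk : 0 < k) (h0 : i 0 ≤ x) :
    ∃ q < k, i q ≤ x ∧ (q + 1 < k → x < i (q + 1)) := by
  set q := Nat.findGreatest (fun r => i r ≤ x) (k - 1)
  refine ⟨q, ?_, Nat.findGreatest_spec (P := fun r => i r ≤ x) (Nat.zero_le _) h0, fun hq => ?_⟩
  · have := Nat.findGreatest_le (P := fun r => i r ≤ x) (k - 1)
    omega
  · exact not_le.mp (Nat.findGreatest_is_greatest (Nat.lt_succ_self q) (by omega))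

section Arcs

variable {n : ℤ} {k : ℕ} {i : ℕ → ℤ}

lemma monotoneOn_Iic_of_strictly_increasing (hmono : ∀ r s : ℕ, r < s → s < k → i r < i s)
    (h0 : 0 ≤ i 0) (hlast : i (k - 1) ≤ n - 1) (hik : i k = i 0 + n) :
    MonotoneOn i (Set.Iic k) := by
  intro r hr s hs hrs
  simp only [Set.mem_Iic] at hr hs
  rcases hrs.eq_or_lt with rfl | hlt
  · exact le_rfl
  rcases hs.eq_or_lt with rfl | hsk
  · have hr_last : i r ≤ i (s - 1) := by
      rcases (show r ≤ s - 1 by omega).eq_or_lt with h | h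
      · rw [h]
      · exact (hmono r (s - 1) h (by omega)).le
    linarith
  · exact (hmono r s hlt hsk).le

lemma period_nonneg (hi : MonotoneOn i (Set.Iic k)) (hik : i k = i 0 + n) : 0 ≤ n := by
  have := hi (Set.mem_Iic.mpr (Nat.zero_le k)) Set.self_mem_Iic (Nat.zero_le k)
  linarith

lemma le_add_period (hi : MonotoneOn i (Set.Iic k)) (hik : i k = i 0 + n) {r s : ℕ}
    (hr : r ≤ k) (hs : s ≤ k) : i s ≤ i r + n := by
  have h0r := hi (Set.mem_Iic.mpr (Nat.zero_le k)) (Set.mem_Iic.mpr hr) (Nat.zero_le r)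
  have hsk := hi (Set.mem_Iic.mpr hs) Set.self_mem_Iic hs
  linarith

lemma exists_inWing_of_inWing_arc (hi : MonotoneOn i (Set.Iic k)) (hik : i k = i 0 + n)
    {a b m : ℤ} {r s : ℕ} (hr : r < k) (hs : s < k)
    (h : InWing (i r) (i (r + 1)) (a + m * n) (b + m * n)) :
    ∃ m' : ℤ, InWing (i s) (i s + n) (a + m' * n) (b + m' * n) := by
  obtain ⟨hab, hra, hbr⟩ := h
  have hr1 : i (r + 1) ≤ i s + n := le_add_period hi hik hs.le hr
  rcases le_or_gt s r with hsr | hrs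
  · have hsr' : i s ≤ i r := hi (Set.mem_Iic.mpr hs.le) (Set.mem_Iic.mpr hr.le) hsr
    exact ⟨m, hab, hsr'.trans hra, hbr.trans hr1⟩
  · have hsr' : i s ≤ i r + n := le_add_period hi hik hr.le hs.le
    have hrs' : i (r + 1) ≤ i s := hi (Set.mem_Iic.mpr hr) (Set.mem_Iic.mpr hs.le) hrs
    exact ⟨m + 1, by linarith, by linarith, by linarith⟩

lemma not_inWing_arc_of_lt (hi : MonotoneOn i (Set.Iic k)) (hik : i k = i 0 + n)
    {a b m m' : ℤ} {r s : ℕ} (hrs : r < s) (hs : s < k)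
    (hr_arc : InWing (i r) (i (r + 1)) (a + m * n) (b + m * n)) :
    ¬ InWing (i s) (i (s + 1)) (a + m' * n) (b + m' * n) := by
  rintro ⟨-, hsa, hbs⟩
  obtain ⟨hab, hra, hbr⟩ := hr_arc
  have hrs' : i (r + 1) ≤ i s := hi (Set.mem_Iic.mpr (by omega)) (Set.mem_Iic.mpr hs.le) hrs
  have hs1 : i (s + 1) ≤ i r + n := le_add_period hi hik (by omega) hs
  have hshift := mul_add_le_of_mul_lt (period_nonneg hi hik) (show m * n < m' * n by linarith)
  linarith

lemma eq_of_inWing_arc (hi : MonotoneOn i (Set.Iic k)) (hik : i k = i 0 + n)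
    {a b m m' : ℤ} {r s : ℕ} (hr : r < k) (hs : s < k)
    (hr_arc : InWing (i r) (i (r + 1)) (a + m * n) (b + m * n))
    (hs_arc : InWing (i s) (i (s + 1)) (a + m' * n) (b + m' * n)) : r = s := by
  rcases lt_trichotomy r s with h | h | h
  · exact absurd hs_arc (not_inWing_arc_of_lt hi hik h hs hr_arc)
  · exact h
  · exact absurd hr_arc (not_inWing_arc_of_lt hi hik h hr hs_arc)

lemma exists_inWing_arc (hi : MonotoneOn i (Set.Iic k)) (hik : i k = i 0 + n) (hk : 0 < k)
    {a b : ℤ} (h : ∀ r < k, ∃ m : ℤ, InWing (i r) (i r + n) (a + m * n) (b + m * n)) :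
    ∃ r < k, ∃ m : ℤ, InWing (i r) (i (r + 1)) (a + m * n) (b + m * n) := by
  obtain ⟨m, hab, h0a, hb0⟩ := h 0 hk
  obtain ⟨q, hqk, hqa, hq_next⟩ := exists_lt_and_le_and_lt_succ hk h0a
  refine ⟨q, hqk, m, hab, hqa, ?_⟩
  by_cases hq : q + 1 < k
  · obtain ⟨m', hm'⟩ := h (q + 1) hq
    exact le_of_inWing_of_lt (period_nonneg hi hik) (hq_next hq) hm'
  · rwa [show q + 1 = k by omega, hik]

end Arcs

theorem wings_intersection_general
    (n : ℤ) (k : ℕ) (hk : 1 ≤ k) (i : ℕ → ℤ)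
    (hmono : ∀ r s : ℕ, r < s → s < k → i r < i s)
    (h0 : 0 ≤ i 0) (hlast : i (k - 1) ≤ n - 1) (hik : i k = i 0 + n) :
    ∀ a b : ℤ, a + 2 ≤ b →
      (((∀ r < k, ∃ m : ℤ, InWing (i r) (i r + n) (a + m * n) (b + m * n)) ↔
          (∃ r < k, ∃ m : ℤ, InWing (i r) (i (r + 1)) (a + m * n) (b + m * n))) ∧
        (∀ r < k, ∀ s < k, ∀ m m' : ℤ,
          InWing (i r) (i (r + 1)) (a + m * n) (b + m * n) →
          InWing (i s) (i (s + 1)) (a + m' * n) (b + m' * n) → r = s)) := by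
  intro a b _
  have hi := monotoneOn_Iic_of_strictly_increasing hmono h0 hlast hik
  refine ⟨⟨exists_inWing_arc hi hik hk, ?_⟩, fun r hr s hs m m' => eq_of_inWing_arc hi hik hr hs⟩
  rintro ⟨r, hr, m, h⟩ s hs
  exact exists_inWing_of_inWing_arc hi hik hr hs h

theorem wings_intersection
    (n : ℤ) (hn : 1 ≤ n) (k : ℕ) (hk : 1 ≤ k) (i : ℕ → ℤ)
    (hmono : ∀ r s : ℕ, r < s → s < k → i r < i s)
    (h0 : 0 ≤ i 0) (hlast : i (k - 1) ≤ n - 1) (hik : i k = i 0 + n) :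
    ∀ a b : ℤ, a + 2 ≤ b →
      (((∀ r < k, ∃ m : ℤ, InWing (i r) (i r + n) (a + m * n) (b + m * n)) ↔
          (∃ r < k, ∃ m : ℤ, InWing (i r) (i (r + 1)) (a + m * n) (b + m * n))) ∧
        (∀ r < k, ∀ s < k, ∀ m m' : ℤ,
          InWing (i r) (i (r + 1)) (a + m * n) (b + m * n) →
          InWing (i s) (i (s + 1)) (a + m' * n) (b + m' * n) → r = s)) :=
  wings_intersection_general n k hk i hmono h0 hlast hik
end
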